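/- Let X ∈ ℝ^{n×d}, y ∈ ℝ^n, A = [X y] ∈ ℝ^{n×(d+1)}, and let Q ∈ ℝ^{(d+1)×(d+1)} satisfy QᵀQ = AᵀA. Let c ≥ 0 and = [A; c·Q]. Let S ∈ ℝ^{r×(n+d+1)} and 0 < μ < 1, and assume that for every v ∈ ℝ^{d+1}, (1−μ)‖Âv‖₂² ≤ ‖SÂv‖₂² ≤ (1+μ)‖Âv‖₂². If β ∈ ℝ^d minimizes the sketched objective β̃ ↦ ‖SÂβ̃₋₁‖₂, then: (i) for every β̃ ∈ ℝ^d, ‖SÂβ₋₁‖₂² ≤ (1+μ)(1+c²)·‖Xβ̃ − y‖₂², and (ii) for every β̃ ∈ ℝ^d, ‖Xβ − y‖₂² ≤ ((1+μ)/(1−μ))·‖Xβ̃ − y‖₂², i.e., solving the regression problem on the private sketch SÂ is equivalent to approximately solving an unregularized least-squares problem. -/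

import Mathlib

open Matrix BigOperators

/-! The augmented matrix `Â` only rescales
the residual norms: `QᵀQ = AᵀA` gives `‖Âv‖² = ‖Av‖² + c²‖Qv‖² = (1 + c²)‖Av‖²`, while
`A (β̃, -1) = Xβ̃ - y`. Hence the sketched objective at any `β̃` is at most
`(1 + μ)(1 + c²)‖Xβ̃ - y‖²`, which bounds the sketched optimum, and comparing with the lower
embedding bound `(1 - μ)(1 + c²)‖Xβ - y‖²` at the optimum `β` cancels the factor `1 + c²`. -/

def euclNormSq {ι : Type*} [Fintype ι] (v : ι → ℝ) : ℝ := ∑ i, (v i) ^ 2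

noncomputable def euclNorm {ι : Type*} [Fintype ι] (v : ι → ℝ) : ℝ :=
  Real.sqrt (∑ i, (v i) ^ 2)

section EuclNormSq

variable {ι κ : Type*} [Fintype ι] [Fintype κ]

lemma euclNormSq_eq_dotProduct (v : ι → ℝ) : euclNormSq v = v ⬝ᵥ v := by
  simp only [euclNormSq, dotProduct, sq]

lemma euclNormSq_nonneg (v : ι → ℝ) : 0 ≤ euclNormSq v :=
  Finset.sum_nonneg fun _ _ => sq_nonneg _

lemma euclNormSq_smul (c : ℝ) (v : ι → ℝ) : euclNormSq (c • v) = c ^ 2 * euclNormSq v := by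
  simp only [euclNormSq, Pi.smul_apply, smul_eq_mul, mul_pow, Finset.mul_sum]

lemma euclNorm_le_euclNorm_iff (v w : ι → ℝ) :
    euclNorm v ≤ euclNorm w ↔ euclNormSq v ≤ euclNormSq w :=
  Real.sqrt_le_sqrt_iff (euclNormSq_nonneg w)

lemma euclNormSq_mulVec (M : Matrix ι κ ℝ) (v : κ → ℝ) :
    euclNormSq (M *ᵥ v) = v ⬝ᵥ (Mᵀ * M) *ᵥ v := by
  rw [euclNormSq_eq_dotProduct, ← mulVec_mulVec, dotProduct_mulVec v, vecMul_transpose]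

lemma euclNormSq_mulVec_eq_of_gram_eq {ι' : Type*} [Fintype ι'] {A : Matrix ι κ ℝ}
    {Q : Matrix ι' κ ℝ} (hQ : Qᵀ * Q = Aᵀ * A) (v : κ → ℝ) :
    euclNormSq (Q *ᵥ v) = euclNormSq (A *ᵥ v) := by
  rw [euclNormSq_mulVec, euclNormSq_mulVec, hQ]

lemma euclNormSq_fromRows_mulVec {ι' : Type*} [Fintype ι'] (A : Matrix ι κ ℝ)
    (B : Matrix ι' κ ℝ) (v : κ → ℝ) :
    euclNormSq (fromRows A B *ᵥ v) = euclNormSq (A *ᵥ v) + euclNormSq (B *ᵥ v) := by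
  simp only [euclNormSq, Fintype.sum_sum_type, fromRows_mulVec, Sum.elim_inl, Sum.elim_inr]

lemma euclNormSq_fromRows_smul_mulVec_of_gram_eq {ι' : Type*} [Fintype ι']
    {A : Matrix ι κ ℝ} {Q : Matrix ι' κ ℝ} (hQ : Qᵀ * Q = Aᵀ * A) (c : ℝ) (v : κ → ℝ) :
    euclNormSq (fromRows A (c • Q) *ᵥ v) = (1 + c ^ 2) * euclNormSq (A *ᵥ v) := by
  rw [euclNormSq_fromRows_mulVec, smul_mulVec, euclNormSq_smul,
    euclNormSq_mulVec_eq_of_gram_eq hQ]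
  ring

end EuclNormSq

lemma mulVec_sumElim_neg_one {n d : Type*} [Fintype d] (X : Matrix n d ℝ) (y : n → ℝ)
    (β : d → ℝ) :
    ((fun i => Sum.elim (X i) (fun _ => y i)) : Matrix n (d ⊕ Unit) ℝ) *ᵥ
        Sum.elim β (fun _ => -1) = X *ᵥ β - y := by
  funext i
  simp [mulVec, dotProduct, Fintype.sum_sum_type, sub_eq_add_neg]

theorem stmt6_general {n d r : ℕ} (X : Matrix (Fin n) (Fin d) ℝ) (y : Fin n → ℝ)
    (A : Matrix (Fin n) (Fin d ⊕ Unit) ℝ)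
    (hA : A = fun i => Sum.elim (X i) (fun _ => y i))
    (Q : Matrix (Fin d ⊕ Unit) (Fin d ⊕ Unit) ℝ)
    (hQ : Qᵀ * Q = Aᵀ * A) (c : ℝ)
    (Ahat : Matrix (Fin n ⊕ (Fin d ⊕ Unit)) (Fin d ⊕ Unit) ℝ)
    (hAhat : Ahat = Matrix.fromRows A (c • Q))
    (S : Matrix (Fin r) (Fin n ⊕ (Fin d ⊕ Unit)) ℝ) (μ : ℝ) (hμ1 : μ < 1)
    (hembed : ∀ v : Fin d ⊕ Unit → ℝ,
      (1 - μ) * euclNormSq (Ahat.mulVec v) ≤ euclNormSq ((S * Ahat).mulVec v) ∧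
      euclNormSq ((S * Ahat).mulVec v) ≤ (1 + μ) * euclNormSq (Ahat.mulVec v))
    (β : Fin d → ℝ)
    (hmin : ∀ βt : Fin d → ℝ,
      euclNorm ((S * Ahat).mulVec (Sum.elim β fun _ => -1)) ≤
        euclNorm ((S * Ahat).mulVec (Sum.elim βt fun _ => -1))) :
    (∀ βt : Fin d → ℝ,
      euclNormSq ((S * Ahat).mulVec (Sum.elim β fun _ => -1)) ≤
        (1 + μ) * (1 + c ^ 2) * euclNormSq (X.mulVec βt - y)) ∧
    (∀ βt : Fin d → ℝ,
      euclNormSq (X.mulVec β - y) ≤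
        ((1 + μ) / (1 - μ)) * euclNormSq (X.mulVec βt - y)) := by
  have hAhat_norm (βt : Fin d → ℝ) : euclNormSq (Ahat *ᵥ Sum.elim βt fun _ => -1) =
      (1 + c ^ 2) * euclNormSq (X *ᵥ βt - y) := by
    rw [hAhat, euclNormSq_fromRows_smul_mulVec_of_gram_eq hQ, hA, mulVec_sumElim_neg_one]
  have hsketch_opt (βt : Fin d → ℝ) :
      euclNormSq ((S * Ahat) *ᵥ Sum.elim β fun _ => -1) ≤
        (1 + μ) * (1 + c ^ 2) * euclNormSq (X *ᵥ βt - y) :=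
    calc euclNormSq ((S * Ahat) *ᵥ Sum.elim β fun _ => -1)
        ≤ euclNormSq ((S * Ahat) *ᵥ Sum.elim βt fun _ => -1) :=
          (euclNorm_le_euclNorm_iff _ _).1 (hmin βt)
      _ ≤ (1 + μ) * euclNormSq (Ahat *ᵥ Sum.elim βt fun _ => -1) := (hembed _).2
      _ = (1 + μ) * (1 + c ^ 2) * euclNormSq (X *ᵥ βt - y) := by rw [hAhat_norm]; ring
  refine ⟨hsketch_opt, fun βt => ?_⟩
  have hlower := (hembed (Sum.elim β fun _ => -1)).1
  rw [hAhat_norm] at hlower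
  have h1c : 0 < 1 + c ^ 2 := by positivity
  rw [div_mul_eq_mul_div, le_div_iff₀ (by linarith)]
  nlinarith [hlower.trans (hsketch_opt βt)]

/-- When `QᵀQ = AᵀA` and `Â = [A; c·Q]`, solving least squares on a sketch `SÂ` of the
augmented matrix is equivalent to approximately solving the *unregularized* problem:
(i) the sketched optimum value is at most `(1+μ)(1+c²)` times any original objective
value, and (ii) the sketched minimizer is a `((1+μ)/(1−μ))`-approximate minimizer of
`β̃ ↦ ‖X β̃ − y‖₂²`. -/
theorem stmt6 {n d r : ℕ} (X : Matrix (Fin n) (Fin d) ℝ) (y : Fin n → ℝ)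
    (A : Matrix (Fin n) (Fin d ⊕ Unit) ℝ)
    (hA : A = fun i => Sum.elim (X i) (fun _ => y i))
    (Q : Matrix (Fin d ⊕ Unit) (Fin d ⊕ Unit) ℝ)
    (hQ : Qᵀ * Q = Aᵀ * A) (c : ℝ) (hc : 0 ≤ c)
    (Ahat : Matrix (Fin n ⊕ (Fin d ⊕ Unit)) (Fin d ⊕ Unit) ℝ)
    (hAhat : Ahat = Matrix.fromRows A (c • Q))
    (S : Matrix (Fin r) (Fin n ⊕ (Fin d ⊕ Unit)) ℝ) (μ : ℝ) (hμ0 : 0 < μ) (hμ1 : μ < 1)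
    (hembed : ∀ v : Fin d ⊕ Unit → ℝ,
      (1 - μ) * euclNormSq (Ahat.mulVec v) ≤ euclNormSq ((S * Ahat).mulVec v) ∧
      euclNormSq ((S * Ahat).mulVec v) ≤ (1 + μ) * euclNormSq (Ahat.mulVec v))
    (β : Fin d → ℝ)
    (hmin : ∀ βt : Fin d → ℝ,
      euclNorm ((S * Ahat).mulVec (Sum.elim β fun _ => -1)) ≤
        euclNorm ((S * Ahat).mulVec (Sum.elim βt fun _ => -1))) :
    (∀ βt : Fin d → ℝ,
      euclNormSq ((S * Ahat).mulVec (Sum.elim β fun _ => -1)) ≤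
        (1 + μ) * (1 + c ^ 2) * euclNormSq (X.mulVec βt - y)) ∧
    (∀ βt : Fin d → ℝ,
      euclNormSq (X.mulVec β - y) ≤
        ((1 + μ) / (1 - μ)) * euclNormSq (X.mulVec βt - y)) :=
  stmt6_general X y A hA Q hQ c Ahat hAhat S μ hμ1 hembed β hmin
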